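/- Let d ∈ ℕ, a ∈ ℕ with a ≤ d, σ : ℝ → ℝ, b ∈ ℝ, and w ∈ {±1}^d. Then E_{x∼Unif({±1}^d)}[ (∏_{j=1}^{d−a} x_j) σ(w·x + b) ] = (∏_{j=1}^{d−a} w_j) · Δ^{(a)}_{d,b,σ}. In particular, the correlation of the (d−a)-parity with any hidden neuron x ↦ σ(w·x + b) with Rademacher weights w has absolute value |Δ^{(a)}_{d,b,σ}|, independent of w. -/
import Mathlib


/-- `pm b` is the ±1 real value encoded by a Boolean. -/
noncomputable def pm (b : Bool) : ℝ := if b then 1 else -1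

/-- Expectation of `F` over the uniform distribution on `{±1}^d`
(encoded as `Fin d → Bool`): a finite average over the `2^d` sign vectors. -/
noncomputable def Eunif (d : ℕ) (F : (Fin d → Bool) → ℝ) : ℝ :=
  (∑ x : Fin d → Bool, F x) / 2 ^ d

/-- The `(d−a)`-parity `f_a(x) = ∏_{j=1}^{d−a} x_j`. -/
noncomputable def parityF (d a : ℕ) (x : Fin d → Bool) : ℝ :=
  ∏ j ∈ Finset.univ.filter (fun j : Fin d => (j : ℕ) < d - a), pm (x j)

/-- Dot product of two sign vectors. -/
noncomputable def dotB {d : ℕ} (w x : Fin d → Bool) : ℝ := ∑ j, pm (w j) * pm (x j)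

/-- `Δ^{(a)}_{d,b,σ} = E_{x∼Unif({±1}^d)}[(∏_{j=1}^{d−a} x_j) · σ(∑_{j=1}^d x_j + b)]`. -/
noncomputable def Δa (d a : ℕ) (b : ℝ) (σ : ℝ → ℝ) : ℝ :=
  Eunif d (fun x => parityF d a x * σ ((∑ j, pm (x j)) + b))

lemma pm_mul (u v : Bool) : pm u * pm v = pm (u == v) := by
  cases u <;> cases v <;> simp [pm]

lemma abs_pm (u : Bool) : |pm u| = 1 := by cases u <;> simp [pm]

/-- the correlation of the `(d−a)`-parity with a hidden neuron
`x ↦ σ(w·x + b)` with Rademacher weights `w ∈ {±1}^d` equals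
`(∏_{j=1}^{d−a} w_j) · Δ^{(a)}_{d,b,σ}`; in particular its absolute value is
`|Δ^{(a)}_{d,b,σ}|`, independently of `w`. -/
theorem stmt_17 (d a : ℕ) (ha : a ≤ d) (σ : ℝ → ℝ) (b : ℝ) (w : Fin d → Bool) :
    Eunif d (fun x => parityF d a x * σ (dotB w x + b))
      = (∏ j ∈ Finset.univ.filter (fun j : Fin d => (j : ℕ) < d - a), pm (w j))
          * Δa d a b σ ∧
    |Eunif d (fun x => parityF d a x * σ (dotB w x + b))| = |Δa d a b σ| := by
  set C : ℝ := ∏ j ∈ Finset.univ.filter (fun j : Fin d => (j : ℕ) < d - a), pm (w j) with hC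
  have inv : Function.Involutive (fun x : Fin d → Bool => fun j => (w j == x j)) := by
    intro x; funext j; show (w j == (w j == x j)) = x j; cases w j <;> cases x j <;> rfl
  let e := inv.toPerm
  have key : ∀ x, parityF d a x * σ (dotB w x + b)
      = C * (parityF d a (e x) * σ ((∑ j, pm (e x j)) + b)) := by
    intro x
    have hdot : dotB w x = ∑ j, pm (e x j) := by
      unfold dotB
      refine Finset.sum_congr rfl fun j _ => pm_mul _ _
    have hpar : parityF d a x = C * parityF d a (e x) := by
      unfold parityF
      rw [hC, ← Finset.prod_mul_distrib]
      refine Finset.prod_congr rfl fun j _ => ?_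
      show pm (x j) = pm (w j) * pm ((w j == x j))
      cases w j <;> cases x j <;> simp [pm]
    rw [hdot, hpar, mul_assoc]
  have hsum : (∑ x : Fin d → Bool, parityF d a x * σ (dotB w x + b))
      = C * ∑ x : Fin d → Bool, parityF d a x * σ ((∑ j, pm (x j)) + b) := by
    rw [Finset.sum_congr rfl (fun x _ => key x), ← Finset.mul_sum]
    congr 1
    exact Equiv.sum_comp e (fun y => parityF d a y * σ ((∑ j, pm (y j)) + b))
  have h1 : Eunif d (fun x => parityF d a x * σ (dotB w x + b)) = C * Δa d a b σ := by
    unfold Eunif Δa Eunif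
    rw [hsum, mul_div_assoc]
  refine ⟨h1, ?_⟩
  rw [h1, abs_mul]
  have : |C| = 1 := by
    rw [hC, Finset.abs_prod]
    exact Finset.prod_eq_one fun j _ => abs_pm _
  rw [this, one_mul]
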